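/- For every finite sequence w in {1,…,n} and every j ∈ {1,…,n}, the identity Y_{j;w} = (∏_{i=1}^n y_i^{b^w_{n+i,j}}) · ∏_{i=1}^n F_{i;w}^{b^w_{ij}} holds in ℚ(y₁,…,yₙ); here the first factor (determined by the bottom part of the extended matrix B̃_w) is the coefficient of the principal-coefficients pattern at w, i.e., the tropical evaluation of Y_{j;w}. -/

import Mathlib

/-! Statement 3 (Fomin–Zelevinsky, "Cluster algebras IV", Proposition 3.13):
Y_{j;w} equals its tropical evaluation times ∏ F_{i;w}^{b^w_{ij}}. -/
open scoped BigOperators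

noncomputable section

/-- The ambient field `ℚ(x₁,…,xₙ,y₁,…,yₙ)`; the `x`-variables are indexed by
`Sum.inl`, the `y`-variables by `Sum.inr`. -/
abbrev ClusterField (n : ℕ) : Type :=
  FractionRing (MvPolynomial (Fin n ⊕ Fin n) ℚ)

/-- The variable `xᵢ` in the ambient field. -/
def xv (n : ℕ) (i : Fin n) : ClusterField n :=
  algebraMap (MvPolynomial (Fin n ⊕ Fin n) ℚ) (ClusterField n) (MvPolynomial.X (Sum.inl i))

/-- The variable `yⱼ` in the ambient field. -/
def yvF (n : ℕ) (j : Fin n) : ClusterField n :=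
  algebraMap (MvPolynomial (Fin n ⊕ Fin n) ℚ) (ClusterField n) (MvPolynomial.X (Sum.inr j))

/-- The initial `2n × n` extended exchange matrix: top part `B⁰`, bottom part the identity. -/
def initB {n : ℕ} (B0 : Matrix (Fin n) (Fin n) ℤ) :
    Matrix (Fin n ⊕ Fin n) (Fin n) ℤ :=
  Matrix.of fun i j =>
    match i with
    | Sum.inl i' => B0 i' j
    | Sum.inr i' => if i' = j then 1 else 0

/-- Mutation of the `2n × n` extended exchange matrix in direction `k`. -/
def matMut {n : ℕ} (B : Matrix (Fin n ⊕ Fin n) (Fin n) ℤ) (k : Fin n) :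
    Matrix (Fin n ⊕ Fin n) (Fin n) ℤ :=
  Matrix.of fun i j =>
    if i = Sum.inl k ∨ j = k then -B i j
    else B i j + Int.sign (B i k) * max (B i k * B (Sum.inl k) j) 0

/-- One exchange (mutation) step for the cluster variables, with principal coefficients. -/
def Xstep {n : ℕ} (B : Matrix (Fin n ⊕ Fin n) (Fin n) ℤ)
    (X : Fin n → ClusterField n) (k : Fin n) : Fin n → ClusterField n :=
  fun l =>
    if l = k then
      ((∏ j, yvF n j ^ (B (Sum.inr j) k).toNat) * (∏ i, X i ^ (B (Sum.inl i) k).toNat)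
          + (∏ j, yvF n j ^ (-(B (Sum.inr j) k)).toNat) *
              (∏ i, X i ^ (-(B (Sum.inl i) k)).toNat)) / X k
    else X l

/-- The labeled seed (extended matrix together with cluster) attached to the
mutation sequence `w`, for the pattern with principal coefficients. -/
def seed {n : ℕ} (B0 : Matrix (Fin n) (Fin n) ℤ) (w : List (Fin n)) :
    Matrix (Fin n ⊕ Fin n) (Fin n) ℤ × (Fin n → ClusterField n) :=
  w.foldl (fun p k => (matMut p.1 k, Xstep p.1 p.2 k)) (initB B0, fun l => xv n l)

/-- The extended exchange matrix `B̃_w`. -/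
def Bmat {n : ℕ} (B0 : Matrix (Fin n) (Fin n) ℤ) (w : List (Fin n)) :
    Matrix (Fin n ⊕ Fin n) (Fin n) ℤ := (seed B0 w).1

/-- The cluster variable `X_{ℓ;w}`. -/
def Xvar {n : ℕ} (B0 : Matrix (Fin n) (Fin n) ℤ) (w : List (Fin n)) :
    Fin n → ClusterField n := (seed B0 w).2

/-- The field `ℚ(y₁,…,yₙ)`. -/
abbrev YField (n : ℕ) : Type := FractionRing (MvPolynomial (Fin n) ℚ)

/-- The variable `yⱼ` in `ℚ(y₁,…,yₙ)`. -/
def yv (n : ℕ) (j : Fin n) : YField n :=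
  algebraMap (MvPolynomial (Fin n) ℚ) (YField n) (MvPolynomial.X j)

/-- The exchange step at `x₁ = ⋯ = xₙ = 1`: the recursion for the `F`-polynomials. -/
def Fstep {n : ℕ} (B : Matrix (Fin n ⊕ Fin n) (Fin n) ℤ)
    (F : Fin n → YField n) (k : Fin n) : Fin n → YField n :=
  fun l =>
    if l = k then
      ((∏ j, yv n j ^ (B (Sum.inr j) k).toNat) * (∏ i, F i ^ (B (Sum.inl i) k).toNat)
          + (∏ j, yv n j ^ (-(B (Sum.inr j) k)).toNat) *
              (∏ i, F i ^ (-(B (Sum.inl i) k)).toNat)) / F k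
    else F l

/-- The seed of the pattern specialized at `x₁ = ⋯ = xₙ = 1`. -/
def Fseed {n : ℕ} (B0 : Matrix (Fin n) (Fin n) ℤ) (w : List (Fin n)) :
    Matrix (Fin n ⊕ Fin n) (Fin n) ℤ × (Fin n → YField n) :=
  w.foldl (fun p k => (matMut p.1 k, Fstep p.1 p.2 k)) (initB B0, fun _ => 1)

/-- The `F`-polynomial `F_{ℓ;w}`, i.e. the image of `X_{ℓ;w}` under the
specialization `x₁ = ⋯ = xₙ = 1`. -/
def Fpoly {n : ℕ} (B0 : Matrix (Fin n) (Fin n) ℤ) (w : List (Fin n)) :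
    Fin n → YField n := (Fseed B0 w).2


/-- One `Y`-seed mutation step in `ℚ(y₁,…,yₙ)` (using the top part of the matrix). -/
def Ystep {n : ℕ} (B : Matrix (Fin n ⊕ Fin n) (Fin n) ℤ)
    (Y : Fin n → YField n) (k : Fin n) : Fin n → YField n :=
  fun j =>
    if j = k then (Y k)⁻¹
    else Y j * Y k ^ (B (Sum.inl k) j).toNat * (Y k + 1) ^ (-(B (Sum.inl k) j))

/-- The `Y`-pattern seed attached to `w`, with initial `Y`-seed `((y₁,…,yₙ), B⁰)`. -/
def Yseed {n : ℕ} (B0 : Matrix (Fin n) (Fin n) ℤ) (w : List (Fin n)) :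
    Matrix (Fin n ⊕ Fin n) (Fin n) ℤ × (Fin n → YField n) :=
  w.foldl (fun p k => (matMut p.1 k, Ystep p.1 p.2 k)) (initB B0, yv n)

/-- The rational function `Y_{j;w} ∈ ℚ(y₁,…,yₙ)`. -/
def Yfun {n : ℕ} (B0 : Matrix (Fin n) (Fin n) ℤ) (w : List (Fin n)) :
    Fin n → YField n := (Yseed B0 w).2


/-!
Write `a = (F_{1;w},…,F_{n;w}, y₁,…,yₙ)` and `Ŷ_j = ∏ᵢ aᵢ^{b^w_{ij}}` (`i` ranging over all `2n`
rows). Mutation at `k` replaces `a_k` by `(P + M) / a_k` with `P = ∏ aᵢ^{[b_{ik}]₊}` and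
`M = ∏ aᵢ^{[-b_{ik}]₊}`, while `Ŷ_k = P / M`. Since `b_{kk} = 0` (skew-symmetrizability survives
mutation) and `sgn(a)[ab]₊ = [a]₊[b]₊ - [-a]₊[-b]₊`, substituting the matrix mutation rule into
`Ŷ` reproduces the `Y`-seed mutation, so `Y = Ŷ` by induction on `w`. The computation divides by
`F`-polynomials; they are nonzero because the exchange relation is subtraction-free, so each
`F_{i;w}` is a quotient of two polynomials that are positive at `y = (1,…,1)`.
-/

theorem Int.sign_mul_max_mul_zero (a b : ℤ) :
    a.sign * max (a * b) 0 = (a.toNat * b.toNat : ℕ) - ((-a).toNat * (-b).toNat : ℕ) := by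
  push_cast [Int.toNat_eq_max]
  rcases lt_trichotomy a 0 with ha | rfl | ha
  · rw [Int.sign_eq_neg_one_of_neg ha]
    simp only [max_def]; split_ifs <;> nlinarith
  · simp
  · rw [Int.sign_eq_one_of_pos ha]
    simp only [max_def]; split_ifs <;> nlinarith

theorem mul_max_zero_eq_of_mul_eq_neg {R : Type*} [Ring R] [LinearOrder R] [IsOrderedRing R]
    {d e x y : R} (hd : 0 ≤ d) (he : 0 ≤ e) (h : d * x = -(e * y)) :
    d * max x 0 = e * max (-y) 0 := by
  rw [mul_max_of_nonneg _ _ hd, mul_max_of_nonneg _ _ he, h, mul_neg, mul_zero, mul_zero]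

def Matrix.IsSkewSymmetrizedBy {m : Type*} (d : m → ℤ) (A : Matrix m m ℤ) : Prop :=
  ∀ i j, d i * A i j = -(d j * A j i)

theorem Matrix.IsSkewSymmetrizedBy.apply_self_eq_zero {m : Type*} {d : m → ℤ}
    {A : Matrix m m ℤ} (hA : A.IsSkewSymmetrizedBy d) (hd : ∀ i, 0 < d i) (i : m) :
    A i i = 0 := by
  have := hA i i
  have := hd i
  nlinarith

section Mutation
open Sum
variable {n : ℕ} {B : Matrix (Fin n ⊕ Fin n) (Fin n) ℤ}

theorem matMut_apply_inl_self {k : Fin n} (j : Fin n) : matMut B k (inl k) j = -B (inl k) j := by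
  simp [matMut]

theorem matMut_apply_self {k : Fin n} (i : Fin n ⊕ Fin n) : matMut B k i k = -B i k := by
  simp [matMut]

theorem matMut_apply_of_ne {k : Fin n} {i : Fin n ⊕ Fin n} {j : Fin n} (hi : i ≠ inl k)
    (hj : j ≠ k) :
    matMut B k i j = B i j + ((B i k).toNat * (B (inl k) j).toNat : ℕ)
      - ((-B i k).toNat * (-B (inl k) j).toNat : ℕ) := by
  simp [matMut, hi, hj, Int.sign_mul_max_mul_zero, add_sub_assoc]

theorem Matrix.IsSkewSymmetrizedBy.matMut {d : Fin n → ℤ} (hd : ∀ i, 0 < d i)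
    (hB : (B.submatrix inl id).IsSkewSymmetrizedBy d) (k : Fin n) :
    ((matMut B k).submatrix inl id).IsSkewSymmetrizedBy d := by
  have hB' : ∀ i j, d i * B (inl i) j = -(d j * B (inl j) i) := hB
  intro i j
  simp only [Matrix.submatrix_apply, id]
  by_cases hik : i = k
  · subst hik
    rw [matMut_apply_inl_self, matMut_apply_self]
    linear_combination -hB' i j
  by_cases hjk : j = k
  · subst hjk
    rw [matMut_apply_inl_self, matMut_apply_self]
    linear_combination -hB' i j
  rw [matMut_apply_of_ne (by simpa using hik) hjk, matMut_apply_of_ne (by simpa using hjk) hik]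
  push_cast [Int.toNat_eq_max]
  have hB_neg : ∀ i j, d i * -B (inl i) j = -(d j * -B (inl j) i) := fun i j => by
    linear_combination -hB' i j
  have m1 := mul_max_zero_eq_of_mul_eq_neg (hd i).le (hd k).le (hB' i k)
  have m2 := mul_max_zero_eq_of_mul_eq_neg (hd i).le (hd k).le (hB_neg i k)
  have m3 := mul_max_zero_eq_of_mul_eq_neg (hd j).le (hd k).le (hB' j k)
  have m4 := mul_max_zero_eq_of_mul_eq_neg (hd j).le (hd k).le (hB_neg j k)
  rw [neg_neg] at m2 m4
  linear_combination hB' i j + max (B (inl k) j) 0 * m1 - max (-B (inl k) j) 0 * m2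
    + max (B (inl k) i) 0 * m3 - max (-B (inl k) i) 0 * m4

end Mutation

section PositiveFractions
variable {R K S : Type*} [CommRing R] [Field K] [Algebra R K] [CommRing S] [PartialOrder S]

def IsRatioOfPositives (φ : R →+* S) (z : K) : Prop :=
  ∃ p q : R, 0 < φ p ∧ 0 < φ q ∧ algebraMap R K p / algebraMap R K q = z

namespace IsRatioOfPositives
variable {φ : R →+* S} {z z' : K}

theorem algebraMap_ne_zero [IsFractionRing R K] {p : R} (hp : 0 < φ p) :
    algebraMap R K p ≠ 0 :=
  IsFractionRing.to_map_eq_zero_iff.not.2 fun h0 => by simp [h0] at hp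

theorem ne_zero [IsFractionRing R K] (h : IsRatioOfPositives φ z) : z ≠ 0 := by
  obtain ⟨p, q, hp, hq, rfl⟩ := h
  exact div_ne_zero (algebraMap_ne_zero hp) (algebraMap_ne_zero hq)

theorem inv (h : IsRatioOfPositives φ z) : IsRatioOfPositives φ z⁻¹ := by
  obtain ⟨p, q, hp, hq, rfl⟩ := h
  exact ⟨q, p, hq, hp, (inv_div _ _).symm⟩

variable [IsStrictOrderedRing S]

theorem of_pos {p : R} (hp : 0 < φ p) : IsRatioOfPositives φ (algebraMap R K p) :=
  ⟨p, 1, hp, by simp, by simp⟩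

theorem one : IsRatioOfPositives φ (1 : K) := by
  simpa using of_pos (φ := φ) (K := K) (p := 1) (by simp)

theorem mul (h : IsRatioOfPositives φ z) (h' : IsRatioOfPositives φ z') :
    IsRatioOfPositives φ (z * z') := by
  obtain ⟨p, q, hp, hq, rfl⟩ := h
  obtain ⟨p', q', hp', hq', rfl⟩ := h'
  exact ⟨p * p', q * q', by simpa using mul_pos hp hp', by simpa using mul_pos hq hq', by
    simp [div_mul_div_comm]⟩

theorem div (h : IsRatioOfPositives φ z) (h' : IsRatioOfPositives φ z') :
    IsRatioOfPositives φ (z / z') := by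
  simpa [div_eq_mul_inv] using h.mul h'.inv

theorem add [IsFractionRing R K] (h : IsRatioOfPositives φ z) (h' : IsRatioOfPositives φ z') :
    IsRatioOfPositives φ (z + z') := by
  obtain ⟨p, q, hp, hq, rfl⟩ := h
  obtain ⟨p', q', hp', hq', rfl⟩ := h'
  refine ⟨p * q' + q * p', q * q', ?_, by simpa using mul_pos hq hq', ?_⟩
  · simpa using add_pos (mul_pos hp hq') (mul_pos hq hp')
  · rw [div_add_div _ _ (algebraMap_ne_zero hq) (algebraMap_ne_zero hq')]
    simp

theorem pow (h : IsRatioOfPositives φ z) (m : ℕ) : IsRatioOfPositives φ (z ^ m) := by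
  induction m with
  | zero => simpa using one
  | succ m ih => rw [pow_succ]; exact ih.mul h

theorem prod {ι : Type*} {s : Finset ι} {f : ι → K} (h : ∀ i ∈ s, IsRatioOfPositives φ (f i)) :
    IsRatioOfPositives φ (∏ i ∈ s, f i) :=
  Finset.prod_induction f _ (fun _ _ => mul) one h

theorem prod_pow {ι : Type*} {s : Finset ι} {f : ι → K} (h : ∀ i ∈ s, IsRatioOfPositives φ (f i))
    (e : ι → ℕ) : IsRatioOfPositives φ (∏ i ∈ s, f i ^ e i) :=
  prod fun i hi => (h i hi).pow (e i)

end IsRatioOfPositives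

end PositiveFractions

section Monomials
variable {K ι : Type*} [Field K] [Fintype ι]

def prodPowToNat (a : ι → K) (c : ι → ℤ) : K := ∏ i, a i ^ (c i).toNat

theorem zpow_eq_pow_toNat_div {G₀ : Type*} [GroupWithZero G₀] {x : G₀} (hx : x ≠ 0) (e : ℤ) :
    x ^ e = x ^ e.toNat / x ^ (-e).toNat := by
  rw [← zpow_natCast, ← zpow_natCast, ← zpow_sub₀ hx, Int.toNat_sub_toNat_neg]

theorem prod_zpow_eq_prodPowToNat_div {a : ι → K} (ha : ∀ i, a i ≠ 0) (c : ι → ℤ) :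
    ∏ i, a i ^ c i = prodPowToNat a c / prodPowToNat a (-c) := by
  simp only [prodPowToNat, ← Finset.prod_div_distrib, Pi.neg_apply,
    ← zpow_eq_pow_toNat_div (ha _)]

theorem prodPowToNat_ne_zero {a : ι → K} (ha : ∀ i, a i ≠ 0) (c : ι → ℤ) :
    prodPowToNat a c ≠ 0 :=
  Finset.prod_ne_zero_iff.2 fun i _ => pow_ne_zero _ (ha i)

variable [DecidableEq ι]

theorem prod_update_zpow (a : ι → K) (r : ι) (x : K) (e : ι → ℤ) :
    ∏ i, Function.update a r x i ^ e i = x ^ e r * ∏ i ∈ Finset.univ.erase r, a i ^ e i := by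
  rw [← Finset.mul_prod_erase _ _ (Finset.mem_univ r), Function.update_self]
  congr 1
  exact Finset.prod_congr rfl fun i hi => by rw [Function.update_of_ne (Finset.ne_of_mem_erase hi)]

theorem prod_update_zpow_neg (a : ι → K) {r : ι} {c : ι → ℤ} (hcr : c r = 0) (x : K) :
    ∏ i, Function.update a r x i ^ (-c i) = (∏ i, a i ^ c i)⁻¹ := by
  rw [← Finset.prod_inv_distrib]
  refine Fintype.prod_congr _ _ fun i => ?_
  rcases eq_or_ne i r with rfl | hi
  · simp [hcr]
  · rw [Function.update_of_ne hi, zpow_neg]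

theorem prod_update_zpow_mutation {a : ι → K} (ha : ∀ i, a i ≠ 0) {r : ι} {c e e' : ι → ℤ}
    (hcr : c r = 0) (her : e' r = -e r)
    (he' : ∀ i ≠ r, e' i = e i + ((c i).toNat * (e r).toNat : ℕ)
      - ((-c i).toNat * (-e r).toNat : ℕ)) :
    ∏ i, Function.update a r ((prodPowToNat a c + prodPowToNat a (-c)) / a r) i ^ e' i =
      (∏ i, a i ^ e i) * (prodPowToNat a c / prodPowToNat a (-c)) ^ (e r).toNat *
        (prodPowToNat a c / prodPowToNat a (-c) + 1) ^ (-e r) := by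
  set P := prodPowToNat a c
  set M := prodPowToNat a (-c)
  set b := e r
  have hM : M ≠ 0 := prodPowToNat_ne_zero ha _
  have hrest : ∏ i ∈ Finset.univ.erase r, a i ^ e' i =
      (∏ i, a i ^ e i) / a r ^ b * P ^ b.toNat / M ^ (-b).toNat := by
    have hP_erase : ∏ i ∈ Finset.univ.erase r, a i ^ (c i).toNat = P :=
      Finset.prod_erase _ (by simp [hcr])
    have hM_erase : ∏ i ∈ Finset.univ.erase r, a i ^ (-c i).toNat = M :=
      Finset.prod_erase _ (by simp [hcr])
    rw [← Finset.prod_erase_mul _ _ (Finset.mem_univ r),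
      mul_div_cancel_right₀ _ (zpow_ne_zero _ (ha r)), ← hP_erase, ← hM_erase,
      ← Finset.prod_pow, ← Finset.prod_pow, ← Finset.prod_mul_distrib, ← Finset.prod_div_distrib]
    refine Finset.prod_congr rfl fun i hi => ?_
    rw [he' i (Finset.ne_of_mem_erase hi), zpow_sub₀ (ha i), zpow_add₀ (ha i), zpow_natCast,
      zpow_natCast, pow_mul, pow_mul]
  rw [prod_update_zpow, her, hrest, div_add_one hM, div_zpow, div_zpow]
  simp only [zpow_neg]
  rw [zpow_eq_pow_toNat_div hM b, div_pow]
  have := ha r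
  field_simp

end Monomials

theorem List.foldl_prodMk_fst {α β γ : Type*} (g : α → γ → α) (h : α → β → γ → β)
    (l : List γ) (a : α) (b : β) :
    (l.foldl (fun p k => (g p.1 k, h p.1 p.2 k)) (a, b)).1 = l.foldl g a := by
  induction l generalizing a b <;> simp [*]

section Seeds
open Sum
variable {n : ℕ} (B0 : Matrix (Fin n) (Fin n) ℤ) (w : List (Fin n)) (k : Fin n)

theorem Bmat_eq_foldl : Bmat B0 w = w.foldl matMut (initB B0) :=
  List.foldl_prodMk_fst _ _ _ _ _

theorem Bmat_append_singleton : Bmat B0 (w ++ [k]) = matMut (Bmat B0 w) k := by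
  simp [Bmat_eq_foldl]

theorem Fpoly_append_singleton : Fpoly B0 (w ++ [k]) = Fstep (Bmat B0 w) (Fpoly B0 w) k := by
  simp [Fpoly, Fseed, Bmat_eq_foldl, List.foldl_prodMk_fst]

theorem Yfun_append_singleton : Yfun B0 (w ++ [k]) = Ystep (Bmat B0 w) (Yfun B0 w) k := by
  simp [Yfun, Yseed, Bmat_eq_foldl, List.foldl_prodMk_fst]

end Seeds

section Pattern
open Sum
variable {n : ℕ}

theorem isSkewSymmetrizedBy_Bmat {B0 : Matrix (Fin n) (Fin n) ℤ} {d : Fin n → ℤ}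
    (hd : ∀ i, 0 < d i) (hskew : B0.IsSkewSymmetrizedBy d) (w : List (Fin n)) :
    ((Bmat B0 w).submatrix inl id).IsSkewSymmetrizedBy d := by
  induction w using List.reverseRecOn with
  | nil => exact hskew
  | append_singleton w k ih =>
    rw [Bmat_append_singleton]
    exact ih.matMut hd k

theorem isRatioOfPositives_yv (j : Fin n) :
    IsRatioOfPositives (MvPolynomial.eval (1 : Fin n → ℚ)) (yv n j) :=
  IsRatioOfPositives.of_pos (by simp)

theorem isRatioOfPositives_Fstep {B : Matrix (Fin n ⊕ Fin n) (Fin n) ℤ} {F : Fin n → YField n}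
    (hF : ∀ i, IsRatioOfPositives (MvPolynomial.eval (1 : Fin n → ℚ)) (F i)) (k l : Fin n) :
    IsRatioOfPositives (MvPolynomial.eval (1 : Fin n → ℚ)) (Fstep B F k l) := by
  have hyv := fun i (_ : i ∈ Finset.univ) => isRatioOfPositives_yv (n := n) i
  have hF' := fun i (_ : i ∈ Finset.univ) => hF i
  unfold Fstep
  split_ifs
  · exact (((IsRatioOfPositives.prod_pow hyv _).mul (IsRatioOfPositives.prod_pow hF' _)).add
      ((IsRatioOfPositives.prod_pow hyv _).mul (IsRatioOfPositives.prod_pow hF' _))).div (hF k)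
  · exact hF l

theorem isRatioOfPositives_Fpoly (B0 : Matrix (Fin n) (Fin n) ℤ) (w : List (Fin n)) (i : Fin n) :
    IsRatioOfPositives (MvPolynomial.eval (1 : Fin n → ℚ)) (Fpoly B0 w i) := by
  induction w using List.reverseRecOn generalizing i with
  | nil => exact IsRatioOfPositives.one
  | append_singleton w k ih =>
    rw [Fpoly_append_singleton]
    exact isRatioOfPositives_Fstep ih k i

theorem sumElim_Fstep (B : Matrix (Fin n ⊕ Fin n) (Fin n) ℤ) (F : Fin n → YField n) (k : Fin n) :
    Sum.elim (Fstep B F k) (yv n) = Function.update (Sum.elim F (yv n)) (inl k)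
      ((prodPowToNat (Sum.elim F (yv n)) (fun i => B i k) +
          prodPowToNat (Sum.elim F (yv n)) (-fun i => B i k)) / Sum.elim F (yv n) (inl k)) := by
  ext (i | i)
  · rcases eq_or_ne i k with rfl | hi
    · simp [Fstep, prodPowToNat, Fintype.prod_sum_type, mul_comm]
    · simp [Fstep, hi]
  · simp

theorem Ystep_eq_prod_zpow {B : Matrix (Fin n ⊕ Fin n) (Fin n) ℤ} {F : Fin n → YField n}
    (hF : ∀ i, F i ≠ 0) {k : Fin n} (hkk : B (inl k) k = 0) {Y : Fin n → YField n}
    (hY : ∀ j, Y j = ∏ i, Sum.elim F (yv n) i ^ B i j) (j : Fin n) :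
    Ystep B Y k j = ∏ i, Sum.elim (Fstep B F k) (yv n) i ^ matMut B k i j := by
  have ha : ∀ i, Sum.elim F (yv n) i ≠ 0 := by
    rintro (i | i)
    exacts [hF i, (isRatioOfPositives_yv i).ne_zero]
  have hYk : Y k = prodPowToNat (Sum.elim F (yv n)) (fun i => B i k) /
      prodPowToNat (Sum.elim F (yv n)) (-fun i => B i k) :=
    (hY k).trans (prod_zpow_eq_prodPowToNat_div ha _)
  rw [sumElim_Fstep]
  rcases eq_or_ne j k with rfl | hjk
  · simp only [Ystep, matMut_apply_self, ↓reduceIte]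
    rw [prod_update_zpow_neg (c := fun i => B i j) _ hkk, hY]
  · simp only [Ystep, if_neg hjk]
    rw [prod_update_zpow_mutation (e := fun i => B i j) (e' := fun i => matMut B k i j) ha hkk
      (matMut_apply_inl_self j) (fun i hi => matMut_apply_of_ne hi hjk), ← hYk, ← hY j]

theorem Yfun_eq_prod_zpow {B0 : Matrix (Fin n) (Fin n) ℤ} {d : Fin n → ℤ} (hd : ∀ i, 0 < d i)
    (hskew : B0.IsSkewSymmetrizedBy d) (w : List (Fin n)) (j : Fin n) :
    Yfun B0 w j = ∏ i, Sum.elim (Fpoly B0 w) (yv n) i ^ Bmat B0 w i j := by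
  induction w using List.reverseRecOn generalizing j with
  | nil =>
    simp [Yfun, Yseed, Fpoly, Fseed, Bmat_eq_foldl, initB, Fintype.prod_sum_type]
  | append_singleton w k ih =>
    rw [Yfun_append_singleton, Bmat_append_singleton, Fpoly_append_singleton]
    exact Ystep_eq_prod_zpow (fun i => (isRatioOfPositives_Fpoly B0 w i).ne_zero)
      ((isSkewSymmetrizedBy_Bmat hd hskew w).apply_self_eq_zero hd k) ih j

end Pattern

theorem Y_eq_tropical_mul_prod_F_general (n : ℕ)
    (B0 : Matrix (Fin n) (Fin n) ℤ)
    (d : Fin n → ℤ) (hd : ∀ i, 0 < d i)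
    (hskew : ∀ i j, d i * B0 i j = -(d j * B0 j i)) :
    ∀ (w : List (Fin n)) (j : Fin n),
      Yfun B0 w j =
        (∏ i, yv n i ^ (Bmat B0 w (Sum.inr i) j)) *
          ∏ i, Fpoly B0 w i ^ (Bmat B0 w (Sum.inl i) j) := by
  intro w j
  rw [Yfun_eq_prod_zpow hd hskew w j, Fintype.prod_sum_type, mul_comm]
  rfl

/-- `Y_{j;w} = (∏ᵢ yᵢ^{b^w_{n+i,j}}) ⬝ ∏ᵢ F_{i;w}^{b^w_{ij}}`;
the first factor is the coefficient of the principal-coefficients pattern at `w`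
(the tropical evaluation of `Y_{j;w}`). -/
theorem Y_eq_tropical_mul_prod_F (n : ℕ) (hn : 1 ≤ n)
    (B0 : Matrix (Fin n) (Fin n) ℤ)
    (d : Fin n → ℤ) (hd : ∀ i, 0 < d i)
    (hskew : ∀ i j, d i * B0 i j = -(d j * B0 j i)) :
    ∀ (w : List (Fin n)) (j : Fin n),
      Yfun B0 w j =
        (∏ i, yv n i ^ (Bmat B0 w (Sum.inr i) j)) *
          ∏ i, Fpoly B0 w i ^ (Bmat B0 w (Sum.inl i) j) :=
  Y_eq_tropical_mul_prod_F_general n B0 d hd hskew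

end
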